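/- Let F be a finite chordal polynomial set in K[x_1,...,x_n] such that x_1 < ... < x_n is a perfect elimination ordering of G(F). Then every pair (P, Q) of finite polynomial sets obtained from the pair (F, ∅) by finitely many Wang steps satisfies G(P) ⊆ G(F) and G(Q) ⊆ G(F). -/

import Mathlib

open MvPolynomial

variable {K : Type*} [Field K] {n : ℕ}

/-- The set of variables effectively appearing in a polynomial. -/
def psupp (F : MvPolynomial (Fin n) K) : Set (Fin n) := ↑F.vars

/-- The set of variables appearing in a set of polynomials. -/
def ssupp (P : Set (MvPolynomial (Fin n) K)) : Set (Fin n) :=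
  ⋃ F ∈ P, psupp F

/-- Adjacency in the associated graph `G(P)`: `p ≠ q` and some polynomial of `P`
contains both variables. -/
def adjG (P : Set (MvPolynomial (Fin n) K)) (p q : Fin n) : Prop :=
  p ≠ q ∧ ∃ F ∈ P, p ∈ psupp F ∧ q ∈ psupp F

/-- `G(P) ⊆ G(Q)`: every edge of `G(P)` is an edge of `G(Q)`. -/
def subG (P Q : Set (MvPolynomial (Fin n) K)) : Prop :=
  ∀ p q, adjG P p q → adjG Q p q

/-- The natural ordering `x_1 < ... < x_n` of the variables is a perfect elimination
ordering of `G(P)`; in particular `G(P)` is chordal. -/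
def isPEO (P : Set (MvPolynomial (Fin n) K)) : Prop :=
  ∀ p q k : Fin n, p < k → q < k → p ≠ q → adjG P p k → adjG P q k → adjG P p q

/-- `F` is nonconstant with leading variable `x_k`. -/
def hasLv (F : MvPolynomial (Fin n) K) (k : Fin n) : Prop :=
  k ∈ psupp F ∧ ∀ j ∈ psupp F, j ≤ k

/-- `P^(k)`: the polynomials of `P` with leading variable `x_k`. -/
def levelSet (P : Set (MvPolynomial (Fin n) K)) (k : Fin n) :
    Set (MvPolynomial (Fin n) K) :=
  {F | F ∈ P ∧ hasLv F k}

/-- A Wang step: transform a pair `(P, Q)` of polynomial sets by choosing `k` with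
`P^(k) ≠ ∅` and `T ∈ P^(k)`, and either (left branch) passing to
`((P \ P^(k)) ∪ {T} ∪ R, Q ∪ {I})` for a finite set `R` with
`supp R ⊆ supp (P^(k))` and a polynomial `I` with `supp I ⊆ supp T`, or
(right branch) passing to `((P \ {T}) ∪ {I, R'}, Q)` for polynomials `I, R'` with
`supp I ⊆ supp T` and `supp R' ⊆ supp T`. -/
def WangStep (PQ PQ' :
    Set (MvPolynomial (Fin n) K) × Set (MvPolynomial (Fin n) K)) : Prop :=
  ∃ (k : Fin n) (T : MvPolynomial (Fin n) K), T ∈ levelSet PQ.1 k ∧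
    ((∃ (R : Set (MvPolynomial (Fin n) K)) (I : MvPolynomial (Fin n) K),
        R.Finite ∧ ssupp R ⊆ ssupp (levelSet PQ.1 k) ∧ psupp I ⊆ psupp T ∧
        PQ'.1 = (PQ.1 \ levelSet PQ.1 k) ∪ {T} ∪ R ∧ PQ'.2 = PQ.2 ∪ {I}) ∨
      (∃ I R' : MvPolynomial (Fin n) K, psupp I ⊆ psupp T ∧ psupp R' ⊆ psupp T ∧
        PQ'.1 = (PQ.1 \ {T}) ∪ {I, R'} ∧ PQ'.2 = PQ.2))

/-!
Every polynomial produced by a Wang step has its support inside the support of `T` or of the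
level set `P^(k)`, so it suffices that these supports are cliques of `G(F)`. For `T` this is
the inductive hypothesis `G(P) ⊆ G(F)`. A variable of `P^(k)` is either `x_k` or a smaller
variable adjacent to `x_k` in `G(P)`, hence in `G(F)`; two such smaller variables are then
adjacent in `G(F)` because `x_1 < ... < x_n` is a perfect elimination ordering.
-/

theorem adjG.symm {P : Set (MvPolynomial (Fin n) K)} {p q : Fin n} (h : adjG P p q) :
    adjG P q p := by
  obtain ⟨hpq, F, hF, hp, hq⟩ := h
  exact ⟨hpq.symm, F, hF, hq, hp⟩

theorem subG_iff_forall_pairwise {P Fs : Set (MvPolynomial (Fin n) K)} :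
    subG P Fs ↔ ∀ F ∈ P, (psupp F).Pairwise (adjG Fs) := by
  constructor
  · intro h F hF p hp q hq hpq
    exact h p q ⟨hpq, F, hF, hp, hq⟩
  · rintro h p q ⟨hpq, F, hF, hp, hq⟩
    exact h F hF hp hq hpq

theorem subG_empty (Fs : Set (MvPolynomial (Fin n) K)) : subG ∅ Fs :=
  fun _ _ ⟨_, _, hF, _⟩ => hF.elim

theorem eq_or_lt_and_adjG_of_mem_ssupp_levelSet {P : Set (MvPolynomial (Fin n) K)}
    {k p : Fin n} (hp : p ∈ ssupp (levelSet P k)) : p = k ∨ (p < k ∧ adjG P p k) := by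
  simp only [ssupp, Set.mem_iUnion, exists_prop] at hp
  obtain ⟨F, ⟨hFP, hkF, hle⟩, hpF⟩ := hp
  rcases (hle p hpF).lt_or_eq with hlt | heq
  · exact Or.inr ⟨hlt, hlt.ne, F, hFP, hpF, hkF⟩
  · exact Or.inl heq

theorem pairwise_ssupp_levelSet {Fs P : Set (MvPolynomial (Fin n) K)} (hpeo : isPEO Fs)
    (hP : subG P Fs) (k : Fin n) : (ssupp (levelSet P k)).Pairwise (adjG Fs) := by
  intro p hp q hq hpq
  rcases eq_or_lt_and_adjG_of_mem_ssupp_levelSet hp with rfl | ⟨hpk, hpadj⟩ <;>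
    rcases eq_or_lt_and_adjG_of_mem_ssupp_levelSet hq with rfl | ⟨hqk, hqadj⟩
  · exact absurd rfl hpq
  · exact (hP q p hqadj).symm
  · exact hP p q hpadj
  · exact hpeo p q k hpk hqk hpq (hP p k hpadj) (hP q k hqadj)

theorem WangStep.subG {Fs : Set (MvPolynomial (Fin n) K)} (hpeo : isPEO Fs)
    {PQ PQ' : Set (MvPolynomial (Fin n) K) × Set (MvPolynomial (Fin n) K)}
    (hs : WangStep PQ PQ') (h : subG PQ.1 Fs ∧ subG PQ.2 Fs) :
    subG PQ'.1 Fs ∧ subG PQ'.2 Fs := by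
  have hP := subG_iff_forall_pairwise.mp h.1
  have hQ := subG_iff_forall_pairwise.mp h.2
  simp only [subG_iff_forall_pairwise]
  obtain ⟨k, T, hT, ⟨R, I, -, hR, hI, hP', hQ'⟩ | ⟨I, R', hI, hR', hP', hQ'⟩⟩ := hs
  · rw [hP', hQ']
    refine ⟨?_, ?_⟩
    · rintro F ((hF | rfl) | hF)
      · exact hP F hF.1
      · exact hP F hT.1
      · exact (pairwise_ssupp_levelSet hpeo h.1 k).mono
          ((Set.subset_biUnion_of_mem hF).trans hR)
    · rintro F (hF | rfl)
      · exact hQ F hF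
      · exact (hP T hT.1).mono hI
  · rw [hP', hQ']
    refine ⟨?_, hQ⟩
    rintro F (hF | rfl | rfl)
    · exact hP F hF.1
    · exact (hP T hT.1).mono hI
    · exact (hP T hT.1).mono hR'

theorem statement8_general {K : Type*} [Field K] {n : ℕ}
    (Fs : Set (MvPolynomial (Fin n) K)) (hpeo : isPEO Fs)
    (P Q : Set (MvPolynomial (Fin n) K))
    (h : Relation.ReflTransGen WangStep (Fs, ∅) (P, Q)) :
    subG P Fs ∧ subG Q Fs := by
  suffices ∀ PQ, Relation.ReflTransGen WangStep (Fs, ∅) PQ → subG PQ.1 Fs ∧ subG PQ.2 Fs from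
    this _ h
  intro PQ hPQ
  induction hPQ with
  | refl => exact ⟨fun _ _ => id, subG_empty Fs⟩
  | tail _ hs ih => exact hs.subG hpeo ih

/-- let `Fs` be a finite chordal polynomial set whose natural variable
ordering is a perfect elimination ordering.  Then every pair `(P, Q)` obtained from
`(Fs, ∅)` by finitely many Wang steps satisfies `G(P) ⊆ G(Fs)` and
`G(Q) ⊆ G(Fs)`. -/
theorem statement8 {K : Type*} [Field K] {n : ℕ}
    (Fs : Set (MvPolynomial (Fin n) K)) (hFfin : Fs.Finite) (hpeo : isPEO Fs)
    (P Q : Set (MvPolynomial (Fin n) K))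
    (h : Relation.ReflTransGen WangStep (Fs, ∅) (P, Q)) :
    subG P Fs ∧ subG Q Fs :=
  statement8_general Fs hpeo P Q h
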